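/- Let μ be a probability distribution on ℝ^d, S an m-dimensional subspace, and suppose ‖P_S r(x)‖ ≥ 1 - ξ and ‖r(x)‖ = 1 for μ-almost every x, where r : ℝ^d → ℝ^d is measurable. Suppose further that for μ-almost every x the flat decision boundary condition holds: for all v with ‖v‖ ≤ ρ, |⟪r(x), v⟫| ≥ 1 implies x+v or x−v is misclassified (predicate M(x,v) holds), where ρ = √(e·m)/(δ(1-ξ)). Then there exists v with ‖v‖ ≤ ρ such that ℙ_{x∼μ}[M(x,v)] ≥ 1 - δ. -/

import Mathlib

/-!
Sample the perturbation `w` uniformly from the ball of radius `ρ` in `ℝᵐ ≅ S`. For a fixed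
`x`, `⟪r x, w⟫ = ⟪P_S r x, w⟫` with `‖P_S r x‖ ≥ 1 - ξ`, so `w` can fail at `x` only if it lies
in a slab of half-width `s = 1 / (1 - ξ)` around a hyperplane. Such a slab is a fraction at most
`s √(e m) / ρ = δ` of the ball: it sits in a cylinder of volume `2 s vol(B_{m-1}(ρ))`, while the
ball contains the cylinder of half-height `ρ / √m` over `B_{m-1}(ρ √((m-1)/m))`, and
`(1 + 1/k)^k ≤ e` for `k = m - 1`. By Fubini some `w` then fails on a set of `μ`-measure at
most `δ`.
-/

open MeasureTheory ProbabilityTheory Metric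
open scoped RealInnerProductSpace ENNReal

theorem one_le_exp_one_mul_div_succ_pow (k : ℕ) :
    1 ≤ Real.exp 1 * ((k : ℝ) / (k + 1)) ^ k := by
  have hinv : ((k : ℝ) / (k + 1)) ^ k * (1 + (k : ℝ)⁻¹) ^ k = 1 := by
    rcases eq_or_ne k 0 with rfl | hk
    · simp
    · rw [← mul_pow]
      field_simp
      simp
  calc (1 : ℝ) = ((k : ℝ) / (k + 1)) ^ k * (1 + (k : ℝ)⁻¹) ^ k := hinv.symm
    _ ≤ ((k : ℝ) / (k + 1)) ^ k * Real.exp 1 := by gcongr; exact Real.one_add_inv_pow_le_exp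
    _ = _ := mul_comm _ _

noncomputable def headTail (k : ℕ) (w : EuclideanSpace ℝ (Fin (k + 1))) :
    ℝ × EuclideanSpace ℝ (Fin k) :=
  (w 0, WithLp.toLp 2 fun i => w i.succ)

theorem norm_sq_eq_headTail_fst_sq_add_norm_snd_sq (k : ℕ)
    (w : EuclideanSpace ℝ (Fin (k + 1))) :
    ‖w‖ ^ 2 = (headTail k w).1 ^ 2 + ‖(headTail k w).2‖ ^ 2 := by
  simp [headTail, EuclideanSpace.real_norm_sq_eq, Fin.sum_univ_succ]

theorem measurePreserving_headTail (k : ℕ) : MeasurePreserving (headTail k) := by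
  have hsplit := (MeasurePreserving.id (volume : Measure ℝ)).prod
    (EuclideanSpace.volume_preserving_symm_measurableEquiv_toLp (Fin k)).symm
  rw [← Measure.volume_eq_prod] at hsplit
  exact hsplit.comp ((volume_preserving_piFinSuccAbove (fun _ : Fin (k + 1) => ℝ) 0).comp
    (EuclideanSpace.volume_preserving_symm_measurableEquiv_toLp (Fin (k + 1))))

theorem volume_ball_inter_abs_apply_zero_le (k : ℕ) (s ρ : ℝ) :
    volume (ball (0 : EuclideanSpace ℝ (Fin (k + 1))) ρ ∩ {w | |w 0| ≤ s}) ≤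
      ENNReal.ofReal (2 * s) * volume (ball (0 : EuclideanSpace ℝ (Fin k)) ρ) := by
  have hsub : ball 0 ρ ∩ {w | |w 0| ≤ s} ⊆ headTail k ⁻¹' (Set.Icc (-s) s ×ˢ ball 0 ρ) := by
    rintro w ⟨hw, hw0 : |w 0| ≤ s⟩
    rw [mem_ball_zero_iff] at hw
    have := norm_sq_eq_headTail_fst_sq_add_norm_snd_sq k w
    refine ⟨abs_le.mp hw0, mem_ball_zero_iff.mpr ?_⟩
    nlinarith [norm_nonneg (headTail k w).2, norm_nonneg w]
  calc volume (ball (0 : EuclideanSpace ℝ (Fin (k + 1))) ρ ∩ {w | |w 0| ≤ s})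
      ≤ volume (Set.Icc (-s) s ×ˢ ball (0 : EuclideanSpace ℝ (Fin k)) ρ) :=
        (measure_mono hsub).trans_eq <| (measurePreserving_headTail k).measure_preimage
          (measurableSet_Icc.prod measurableSet_ball).nullMeasurableSet
    _ = _ := by
        rw [Measure.volume_eq_prod, Measure.prod_prod, Real.volume_Icc, sub_neg_eq_add, two_mul]

theorem ofReal_mul_volume_closedBall_le_volume_ball {k : ℕ} {c ρ' ρ : ℝ} (hρ : 0 ≤ ρ)
    (h : c ^ 2 + ρ' ^ 2 ≤ ρ ^ 2) :
    ENNReal.ofReal (2 * c) * volume (closedBall (0 : EuclideanSpace ℝ (Fin k)) ρ') ≤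
      volume (ball (0 : EuclideanSpace ℝ (Fin (k + 1))) ρ) := by
  have hsub : headTail k ⁻¹' (Set.Ioo (-c) c ×ˢ closedBall 0 ρ') ⊆ ball 0 ρ := by
    rintro w ⟨hw0, hw⟩
    rw [Set.mem_Ioo] at hw0
    rw [mem_closedBall_zero_iff] at hw
    rw [mem_ball_zero_iff]
    have := norm_sq_eq_headTail_fst_sq_add_norm_snd_sq k w
    nlinarith [norm_nonneg (headTail k w).2, norm_nonneg w]
  calc ENNReal.ofReal (2 * c) * volume (closedBall (0 : EuclideanSpace ℝ (Fin k)) ρ')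
      = volume (Set.Ioo (-c) c ×ˢ closedBall (0 : EuclideanSpace ℝ (Fin k)) ρ') := by
        rw [Measure.volume_eq_prod, Measure.prod_prod, Real.volume_Ioo, sub_neg_eq_add, two_mul]
    _ ≤ _ := ((measurePreserving_headTail k).measure_preimage
          (measurableSet_Ioo.prod measurableSet_closedBall).nullMeasurableSet).symm.trans_le
          (measure_mono hsub)

theorem volume_ball_inter_abs_apply_zero_le_mul_volume_ball (k : ℕ) {s ρ : ℝ} (hs : 0 ≤ s)
    (hρ : 0 < ρ) :
    volume (ball (0 : EuclideanSpace ℝ (Fin (k + 1))) ρ ∩ {w | |w 0| ≤ s}) ≤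
      ENNReal.ofReal (s * √(Real.exp 1 * (k + 1)) / ρ) *
        volume (ball (0 : EuclideanSpace ℝ (Fin (k + 1))) ρ) := by
  set c := ρ / √(k + 1)
  set ρ' := ρ * √(k / (k + 1))
  set A := s * √(Real.exp 1 * (k + 1)) / ρ
  have hk : (0 : ℝ) < k + 1 := by positivity
  have hcyl : c ^ 2 + ρ' ^ 2 ≤ ρ ^ 2 := by
    simp only [c, ρ', div_pow, mul_pow, Real.sq_sqrt hk.le,
      Real.sq_sqrt (by positivity : (0 : ℝ) ≤ k / (k + 1))]
    field_simp
    linarith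
  have hreal : 2 * s * ρ ^ k ≤ A * (2 * c * ρ' ^ k) := by
    have hexp : 1 ≤ √(Real.exp 1) * √(k / (k + 1)) ^ k := by
      rw [← one_le_sq_iff₀ (by positivity), mul_pow, ← pow_mul, mul_comm k, pow_mul,
        Real.sq_sqrt (Real.exp_pos 1).le, Real.sq_sqrt (by positivity)]
      exact one_le_exp_one_mul_div_succ_pow k
    have : A * (2 * c * ρ' ^ k) = 2 * s * ρ ^ k * (√(Real.exp 1) * √(k / (k + 1)) ^ k) := by
      simp only [A, c, ρ', mul_pow, Real.sqrt_mul (Real.exp_pos 1).le]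
      field_simp
    rw [this]
    exact le_mul_of_one_le_right (by positivity) hexp
  set V := volume (ball (0 : EuclideanSpace ℝ (Fin k)) 1)
  calc volume (ball (0 : EuclideanSpace ℝ (Fin (k + 1))) ρ ∩ {w | |w 0| ≤ s})
      ≤ ENNReal.ofReal (2 * s) * volume (ball (0 : EuclideanSpace ℝ (Fin k)) ρ) :=
        volume_ball_inter_abs_apply_zero_le k s ρ
    _ = ENNReal.ofReal (2 * s * ρ ^ k) * V := by
        rw [Measure.addHaar_ball_of_pos volume 0 hρ, finrank_euclideanSpace_fin, ← mul_assoc,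
          ← ENNReal.ofReal_mul (by positivity)]
    _ ≤ ENNReal.ofReal (A * (2 * c * ρ' ^ k)) * V := by gcongr
    _ = ENNReal.ofReal A * (ENNReal.ofReal (2 * c) *
          volume (closedBall (0 : EuclideanSpace ℝ (Fin k)) ρ')) := by
        rw [Measure.addHaar_closedBall volume 0 (by positivity), finrank_euclideanSpace_fin,
          ENNReal.ofReal_mul (by positivity), ENNReal.ofReal_mul (by positivity)]
        ring
    _ ≤ _ := by gcongr; exact ofReal_mul_volume_closedBall_le_volume_ball hρ.le hcyl

theorem volume_ball_inter_abs_inner_le_mul_volume_ball {n : ℕ} (u : EuclideanSpace ℝ (Fin n))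
    (hu : ‖u‖ = 1) {s ρ : ℝ} (hs : 0 ≤ s) (hρ : 0 < ρ) :
    volume (ball (0 : EuclideanSpace ℝ (Fin n)) ρ ∩ {w | |⟪u, w⟫| ≤ s}) ≤
      ENNReal.ofReal (s * √(Real.exp 1 * n) / ρ) *
        volume (ball (0 : EuclideanSpace ℝ (Fin n)) ρ) := by
  obtain ⟨k, rfl⟩ : ∃ k, n = k + 1 := by
    refine Nat.exists_eq_add_one.mpr (Nat.pos_of_ne_zero ?_)
    rintro rfl
    simp [Subsingleton.elim u 0] at hu
  obtain ⟨b, hb⟩ := Orthonormal.exists_orthonormalBasis_extension_of_card_eq (𝕜 := ℝ)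
    (v := fun _ : Fin (k + 1) => u) (s := {0}) (by simp)
    ⟨fun _ => hu, fun i j hij => absurd (Subtype.ext (i.2.trans j.2.symm)) hij⟩
  have hpre : ball 0 ρ ∩ {w | |⟪u, w⟫| ≤ s} =
      b.measurableEquiv ⁻¹' (ball 0 ρ ∩ {w | |w 0| ≤ s}) := by
    ext w
    simp [OrthonormalBasis.measurableEquiv, b.repr_apply_apply, hb 0 rfl]
  rw [hpre, b.measurePreserving_measurableEquiv.measure_preimage_equiv]
  push_cast
  exact volume_ball_inter_abs_apply_zero_le_mul_volume_ball k hs hρ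

theorem cond_ball_abs_inner_le {n : ℕ} (u : EuclideanSpace ℝ (Fin n)) (hu : ‖u‖ = 1)
    {s ρ : ℝ} (hs : 0 ≤ s) (hρ : 0 < ρ) :
    volume[{w | |⟪u, w⟫| ≤ s} | ball (0 : EuclideanSpace ℝ (Fin n)) ρ] ≤
      ENNReal.ofReal (s * √(Real.exp 1 * n) / ρ) := by
  have hball : volume (ball (0 : EuclideanSpace ℝ (Fin n)) ρ) ≠ 0 :=
    (measure_ball_pos _ _ hρ).ne'
  rw [cond_apply measurableSet_ball, ENNReal.inv_mul_le_iff hball measure_ball_lt_top.ne,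
    mul_comm]
  exact volume_ball_inter_abs_inner_le_mul_volume_ball u hu hs hρ

theorem cond_ball_setOf_not_le_of_flat {E : Type*} [NormedAddCommGroup E]
    [InnerProductSpace ℝ E] {S : Submodule ℝ E} [S.HasOrthogonalProjection] {m : ℕ}
    (φ : EuclideanSpace ℝ (Fin m) ≃ₗᵢ[ℝ] S) {y : E} {Q : E → Prop} {a ρ : ℝ} (ha : 0 < a)
    (hy : a ≤ ‖(S.orthogonalProjectionOnto y : E)‖) (hρ : 0 < ρ)
    (hQ : ∀ v : E, ‖v‖ ≤ ρ → 1 ≤ |⟪y, v⟫| → Q v) :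
    volume[{w | ¬ Q (φ w)} | ball (0 : EuclideanSpace ℝ (Fin m)) ρ] ≤
      ENNReal.ofReal (√(Real.exp 1 * m) / (a * ρ)) := by
  set u := φ.symm (S.orthogonalProjectionOnto y)
  have hu : a ≤ ‖u‖ := by simpa [u] using hy
  have hu0 : 0 < ‖u‖ := ha.trans_le hu
  have hinner : ∀ w, ⟪y, (φ w : E)⟫ = ‖u‖ * ⟪‖u‖⁻¹ • u, w⟫ := fun w => by
    rw [real_inner_smul_left, mul_inv_cancel_left₀ hu0.ne', ← φ.inner_map_map,
      φ.apply_symm_apply, Submodule.inner_orthogonalProjectionOnto_eq_of_mem_right]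
  have hsub : ball 0 ρ ∩ {w | ¬ Q (φ w)} ⊆ {w | |⟪‖u‖⁻¹ • u, w⟫| ≤ 1 / a} := by
    rintro w ⟨hw, hQw⟩
    have hφw : ‖(φ w : E)‖ ≤ ρ := (φ.norm_map w).trans_le (mem_ball_zero_iff.mp hw).le
    have : |⟪y, (φ w : E)⟫| < 1 := not_le.mp fun h => hQw (hQ _ hφw h)
    rw [hinner, abs_mul, abs_norm] at this
    rw [Set.mem_ofPred_eq, le_div_iff₀ ha]
    nlinarith [abs_nonneg ⟪‖u‖⁻¹ • u, w⟫]
  calc volume[{w | ¬ Q (φ w)} | ball 0 ρ]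
      ≤ volume[{w | |⟪‖u‖⁻¹ • u, w⟫| ≤ 1 / a} | ball 0 ρ] := by
        rw [cond_apply measurableSet_ball, cond_apply measurableSet_ball]
        gcongr 1
        exact measure_mono (Set.subset_inter Set.inter_subset_left hsub)
    _ ≤ ENNReal.ofReal (1 / a * √(Real.exp 1 * m) / ρ) :=
        cond_ball_abs_inner_le _
          (by rw [norm_smul, norm_inv, norm_norm, inv_mul_cancel₀ hu0.ne']) (by positivity) hρ
    _ = _ := by rw [one_div_mul_eq_div, div_div]

theorem exists_mem_measure_slice_le {α β : Type*} [MeasurableSpace α] [MeasurableSpace β]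
    {μ : Measure α} {ν : Measure β} [IsProbabilityMeasure μ] [IsProbabilityMeasure ν]
    {B : Set (α × β)} (hB : MeasurableSet B) {T : Set β} (hT : ∀ᵐ y ∂ν, y ∈ T) {ε : ℝ≥0∞}
    (h : ∀ᵐ x ∂μ, ν (Prod.mk x ⁻¹' B) ≤ ε) :
    ∃ y ∈ T, μ ((·, y) ⁻¹' B) ≤ ε := by
  obtain ⟨y, hyT, hy⟩ := exists_notMem_null_le_lintegral
    (measurable_measure_prodMk_right (μ := μ) hB).aemeasurable (ae_iff.mp hT)
  refine ⟨y, not_not.mp hyT, hy.trans ?_⟩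
  calc ∫⁻ y, μ ((·, y) ⁻¹' B) ∂ν = ∫⁻ x, ν (Prod.mk x ⁻¹' B) ∂μ := by
        rw [← Measure.prod_apply_symm hB, Measure.prod_apply hB]
    _ ≤ ∫⁻ _, ε ∂μ := lintegral_mono_ae h
    _ = ε := by simp

theorem stmt_10_general (d m : ℕ) (hm : 1 ≤ m)
    (μ : Measure (EuclideanSpace ℝ (Fin d))) [IsProbabilityMeasure μ]
    (S : Submodule ℝ (EuclideanSpace ℝ (Fin d))) (hSdim : Module.finrank ℝ S = m)
    (r : EuclideanSpace ℝ (Fin d) → EuclideanSpace ℝ (Fin d))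
    (M : EuclideanSpace ℝ (Fin d) → EuclideanSpace ℝ (Fin d) → Prop)
    (hM : MeasurableSet {p : EuclideanSpace ℝ (Fin d) × EuclideanSpace ℝ (Fin d) |
        M p.1 p.2})
    (δ ξ ρ : ℝ) (hδ0 : 0 < δ) (hξ1 : ξ < 1)
    (hρ : ρ = Real.sqrt (Real.exp 1 * m) / (δ * (1 - ξ)))
    (hproj : ∀ᵐ x ∂μ, 1 - ξ ≤ ‖(S.orthogonalProjectionOnto (r x) : EuclideanSpace ℝ (Fin d))‖)
    (hflat : ∀ᵐ x ∂μ, ∀ v : EuclideanSpace ℝ (Fin d),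
      ‖v‖ ≤ ρ → 1 ≤ |⟪r x, v⟫| → M x v) :
    ∃ v : EuclideanSpace ℝ (Fin d), ‖v‖ ≤ ρ ∧ 1 - δ ≤ (μ {x | M x v}).toReal := by
  have hξ : 0 < 1 - ξ := by linarith
  have hem : 0 < √(Real.exp 1 * m) :=
    Real.sqrt_pos.mpr (mul_pos (Real.exp_pos 1) (by exact_mod_cast hm))
  have hρ0 : 0 < ρ := by rw [hρ]; positivity
  let φ : EuclideanSpace ℝ (Fin m) ≃ₗᵢ[ℝ] S :=
    ((stdOrthonormalBasis ℝ S).reindex (finCongr hSdim)).repr.symm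
  let ν := volume[|ball (0 : EuclideanSpace ℝ (Fin m)) ρ]
  have : IsProbabilityMeasure ν := cond_isProbabilityMeasure_of_finite
    (measure_ball_pos _ _ hρ0).ne' measure_ball_lt_top.ne
  have hbad : MeasurableSet {p : EuclideanSpace ℝ (Fin d) × EuclideanSpace ℝ (Fin m) |
      ¬ M p.1 (φ p.2)} :=
    (measurable_fst.prodMk ((continuous_subtype_val.comp φ.continuous).measurable.comp
      measurable_snd) hM).compl
  have hslice : ∀ᵐ x ∂μ, ν {w | ¬ M x (φ w)} ≤ ENNReal.ofReal δ := by
    filter_upwards [hproj, hflat] with x hx hfx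
    convert cond_ball_setOf_not_le_of_flat φ hξ hx hρ0 hfx using 2
    rw [hρ]
    field_simp
  obtain ⟨w, hw, hμw⟩ :=
    exists_mem_measure_slice_le hbad (ae_cond_mem measurableSet_ball) hslice
  refine ⟨φ w, (φ.norm_map w).trans_le (mem_ball_zero_iff.mp hw).le, ?_⟩
  have hMw : MeasurableSet {x | M x (φ w)} := measurable_prodMk_right hM
  have hfail : μ.real {x | M x (φ w)}ᶜ ≤ δ := ENNReal.toReal_le_of_le_ofReal hδ0.le hμw
  rw [probReal_compl_eq_one_sub hMw] at hfail
  rw [← measureReal_def]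
  linarith

/-- Theorem 1 of the paper: under the flat decision boundary model, if the normals
`r(x)` nearly lie in an `m`-dimensional subspace `S`, there exists a universal
perturbation of norm at most `ρ = √(em)/(δ(1-ξ))` fooling a `1-δ` fraction of points. -/
theorem stmt_10 (d m : ℕ) (hm : 1 ≤ m)
    (μ : Measure (EuclideanSpace ℝ (Fin d))) [IsProbabilityMeasure μ]
    (S : Submodule ℝ (EuclideanSpace ℝ (Fin d))) (hSdim : Module.finrank ℝ S = m)
    (r : EuclideanSpace ℝ (Fin d) → EuclideanSpace ℝ (Fin d)) (hr : Measurable r)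
    (M : EuclideanSpace ℝ (Fin d) → EuclideanSpace ℝ (Fin d) → Prop)
    (hM : MeasurableSet {p : EuclideanSpace ℝ (Fin d) × EuclideanSpace ℝ (Fin d) |
        M p.1 p.2})
    (δ ξ ρ : ℝ) (hδ0 : 0 < δ) (hδ1 : δ < 1) (hξ0 : 0 ≤ ξ) (hξ1 : ξ < 1)
    (hρ : ρ = Real.sqrt (Real.exp 1 * m) / (δ * (1 - ξ)))
    (hnorm : ∀ᵐ x ∂μ, ‖r x‖ = 1)
    (hproj : ∀ᵐ x ∂μ, 1 - ξ ≤ ‖(S.orthogonalProjectionOnto (r x) : EuclideanSpace ℝ (Fin d))‖)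
    (hflat : ∀ᵐ x ∂μ, ∀ v : EuclideanSpace ℝ (Fin d),
      ‖v‖ ≤ ρ → 1 ≤ |⟪r x, v⟫| → M x v) :
    ∃ v : EuclideanSpace ℝ (Fin d), ‖v‖ ≤ ρ ∧ 1 - δ ≤ (μ {x | M x v}).toReal :=
  stmt_10_general d m hm μ S hSdim r M hM δ ξ ρ hδ0 hξ1 hρ hproj hflat
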